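/- Let ψ, ν ∈ Ψ and assume lim_{δ → 0+} sup_{p ≥ 2} δ^{1/(p+1)}·ψ(2p)^{p/(p+1)}/ν(p) = 0. Then every martingale (S_n, 𝓕_n) with sup_n ‖S_n‖_{G(ψ)} < ∞ converges almost surely to a random variable S and lim_{n → ∞} ‖S_n − S‖_{G(ν)} = 0. -/

import Mathlib

/-!
If `‖Sₙ‖_{G(ψ)} ≤ B`, the martingale is bounded in `L¹`, so it converges a.s. to some `S`; by
Fatou `‖S‖_{G(ψ)} ≤ B`, and boundedness in `L⁴` makes the family uniformly integrable in `L²`, so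
`δₙ = |Sₙ - S|₂ → 0` by Vitali. Hölder interpolation gives
`|X|_p ≤ |X|_2^{1/(p+1)} |X|_{2p}^{p/(p+1)}` on a probability space; applied to `X = Sₙ - S`, whose
`L^{2p}` norm is at most `2B ψ(2p)`, this bounds `‖Sₙ - S‖_{G(ν)}` by a constant times
`sup_{p ≥ 2} δₙ^{1/(p+1)} ψ(2p)^{p/(p+1)} / ν(p)`, which tends to `0` by hypothesis.
-/

open MeasureTheory Filter Set
open scoped ENNReal Topology

/-- `ψ` belongs to the class `Ψ`: `p ↦ p·log ψ(p)` is continuous, convex, increasing,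
tends to `+∞`, and `ψ(p) → ∞` as `p → ∞`; `ψ` is positive on `[2,∞)`. -/
structure PsiClass (ψ : ℝ → ℝ) : Prop where
  pos : ∀ p : ℝ, 2 ≤ p → 0 < ψ p
  cont : ContinuousOn (fun p => p * Real.log (ψ p)) (Set.Ici 2)
  convex : ConvexOn ℝ (Set.Ici 2) (fun p => p * Real.log (ψ p))
  mono : MonotoneOn (fun p => p * Real.log (ψ p)) (Set.Ici 2)
  tendsto_top : Filter.Tendsto (fun p => p * Real.log (ψ p)) Filter.atTop Filter.atTop
  psi_tendsto_top : Filter.Tendsto ψ Filter.atTop Filter.atTop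

/-- The norm `‖η‖_{G(ψ)} = sup_{p ≥ 2} |η|_p / ψ(p)` (valued in `ℝ≥0∞`). -/
noncomputable def Gnorm {Ω : Type*} [MeasurableSpace Ω] (μ : Measure Ω)
    (ψ : ℝ → ℝ) (η : Ω → ℝ) : ℝ≥0∞ :=
  ⨆ p : {p : ℝ // 2 ≤ p}, eLpNorm η (ENNReal.ofReal (p : ℝ)) μ / ENNReal.ofReal (ψ (p : ℝ))

section LpInterpolation

variable {α E : Type*} {m : MeasurableSpace α} {μ : Measure α} [NormedAddCommGroup E] {f : α → E}

theorem eLpNorm'_le_eLpNorm'_rpow_mul_eLpNorm'_rpow (hf : AEStronglyMeasurable f μ)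
    {p q r θ : ℝ} (hq : 0 < q) (hr : 0 < r) (hθ₀ : 0 < θ) (hθ₁ : θ < 1)
    (hpqr : 1 / p = θ / q + (1 - θ) / r) :
    eLpNorm' f p μ ≤ eLpNorm' f q μ ^ θ * eLpNorm' f r μ ^ (1 - θ) := by
  have hθ₁' : 0 < 1 - θ := sub_pos.2 hθ₁
  have hp : 0 < p := one_div_pos.1 (hpqr ▸ by positivity)
  have hpq : p < q / θ := by
    refine lt_of_one_div_lt_one_div (by positivity) ?_
    rw [hpqr, one_div_div]
    exact lt_add_of_pos_right _ (by positivity)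
  have hpow : ∀ s t : ℝ, 0 < s → 0 < t →
      (∫⁻ x, (‖f x‖ₑ ^ s) ^ (t / s) ∂μ) ^ (1 / (t / s)) = eLpNorm' f t μ ^ s := by
    intro s t hs ht
    simp_rw [← ENNReal.rpow_mul, mul_div_cancel₀ t hs.ne']
    rw [eLpNorm'_eq_lintegral_enorm, ← ENNReal.rpow_mul]
    congr 1
    field_simp
  have hholder := ENNReal.lintegral_Lp_mul_le_Lq_mul_Lr hp hpq (r := r / (1 - θ))
    (by rw [hpqr, one_div_div, one_div_div]) μ
    (hf.enorm.pow_const θ) (hf.enorm.pow_const (1 - θ))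
  rw [hpow θ q hθ₀ hq, hpow (1 - θ) r hθ₁' hr] at hholder
  refine le_of_eq_of_le ?_ hholder
  rw [eLpNorm'_eq_lintegral_enorm]
  congr 2 with x
  rw [Pi.mul_apply, ← ENNReal.rpow_add_of_nonneg _ _ hθ₀.le hθ₁'.le, add_sub_cancel,
    ENNReal.rpow_one]

theorem eLpNorm_le_eLpNorm_two_rpow_mul_eLpNorm_rpow [IsProbabilityMeasure μ]
    (hf : AEStronglyMeasurable f μ) {p : ℝ} (hp : 0 < p) :
    eLpNorm f (ENNReal.ofReal p) μ
      ≤ eLpNorm f 2 μ ^ (1 / (p + 1)) * eLpNorm f (ENNReal.ofReal (2 * p)) μ ^ (p / (p + 1)) := by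
  have hp2 : 0 < 2 * p := by positivity
  rw [eLpNorm_eq_eLpNorm' (by simpa using hp) ENNReal.ofReal_ne_top,
    eLpNorm_eq_eLpNorm' (by simpa using hp2) ENNReal.ofReal_ne_top,
    eLpNorm_eq_eLpNorm' two_ne_zero ENNReal.ofNat_ne_top, ENNReal.toReal_ofReal hp.le,
    ENNReal.toReal_ofReal hp2.le, ENNReal.toReal_ofNat]
  -- `θ = 1/(p+1)` interpolates between `L^{2p/(p+2)}`, which is dominated by `L²`, and `L^{2p}`
  have hq : 0 < 2 * p / (p + 2) := by positivity
  calc eLpNorm' f p μ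
      ≤ eLpNorm' f (2 * p / (p + 2)) μ ^ (1 / (p + 1)) * eLpNorm' f (2 * p) μ ^ (1 - 1 / (p + 1)) :=
        eLpNorm'_le_eLpNorm'_rpow_mul_eLpNorm'_rpow hf hq hp2 (by positivity)
          ((div_lt_one (by positivity)).2 (by linarith)) (by field_simp; ring)
    _ ≤ eLpNorm' f 2 μ ^ (1 / (p + 1)) * eLpNorm' f (2 * p) μ ^ (p / (p + 1)) := by
        rw [show 1 - 1 / (p + 1) = p / (p + 1) by field_simp; ring]
        gcongr
        exact eLpNorm'_le_eLpNorm'_of_exponent_le hq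
          ((div_le_iff₀ (by positivity)).2 (by linarith)) μ hf

end LpInterpolation

theorem unifIntegrable_of_eLpNorm_le {α ι E : Type*} {m : MeasurableSpace α} {μ : Measure α}
    [NormedAddCommGroup E] {f : ι → α → E} {p q : ℝ≥0∞} (hp : p ≠ 0) (hpq : p < q)
    (hf : ∀ i, AEStronglyMeasurable (f i) μ) {D : ℝ≥0∞} (hD : D ≠ ∞)
    (hfD : ∀ i, eLpNorm (f i) q μ ≤ D) : UnifIntegrable f p μ := by
  set a := 1 / p.toReal - 1 / q.toReal
  have ha : 0 < a := by
    have hp' : 0 < p.toReal := ENNReal.toReal_pos hp (hpq.trans_le le_top).ne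
    rcases eq_or_ne q ∞ with rfl | hq
    · simpa [a] using hp'
    · exact sub_pos.2 (one_div_lt_one_div_of_lt hp'
        ((ENNReal.toReal_lt_toReal (hpq.trans_le le_top).ne hq).2 hpq))
  -- Hölder on `s` gives `‖1_s f i‖_p ≤ D μ(s)^a`, which is small uniformly in `i`
  have hsmall : Tendsto (fun δ : ℝ => D * ENNReal.ofReal δ ^ a) (𝓝 0) (𝓝 0) := by
    have := ((ENNReal.continuous_rpow_const (y := a)).comp ENNReal.continuous_ofReal).tendsto 0
    simpa [ENNReal.zero_rpow_of_pos ha] using ENNReal.Tendsto.const_mul this (Or.inr hD)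
  intro ε hε
  obtain ⟨δ, hδε, hδ⟩ := ((hsmall.mono_left (nhdsWithin_le_nhds (s := Ioi 0))).eventually
    (gt_mem_nhds (ENNReal.ofReal_pos.2 hε))).and self_mem_nhdsWithin |>.exists
  refine ⟨δ, hδ, fun i s hs hμs => ?_⟩
  calc eLpNorm (s.indicator (f i)) p μ = eLpNorm (f i) p (μ.restrict s) :=
        eLpNorm_indicator_eq_eLpNorm_restrict hs
    _ ≤ eLpNorm (f i) q (μ.restrict s) * μ.restrict s univ ^ a :=
        eLpNorm_le_eLpNorm_mul_rpow_measure_univ hpq.le (hf i).restrict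
    _ ≤ D * ENNReal.ofReal δ ^ a := by
        rw [Measure.restrict_apply_univ]
        gcongr
        exact (eLpNorm_restrict_le _ _ _ _).trans (hfD i)
    _ ≤ ENNReal.ofReal ε := hδε.le

section GNorm

variable {Ω : Type*} [MeasurableSpace Ω] {μ : Measure Ω} {ψ ν : ℝ → ℝ}

theorem gnorm_le_iff (hψ : ∀ p, 2 ≤ p → 0 < ψ p) {η : Ω → ℝ} {B : ℝ≥0∞} :
    Gnorm μ ψ η ≤ B ↔ ∀ p, 2 ≤ p → eLpNorm η (ENNReal.ofReal p) μ ≤ B * ENNReal.ofReal (ψ p) := by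
  simp only [Gnorm, iSup_le_iff, Subtype.forall]
  exact forall₂_congr fun p hp =>
    ENNReal.div_le_iff (ENNReal.ofReal_pos.2 (hψ p hp)).ne' ENNReal.ofReal_ne_top

theorem eLpNorm_div_le_gnorm (η : Ω → ℝ) {p : ℝ} (hp : 2 ≤ p) :
    eLpNorm η (ENNReal.ofReal p) μ / ENNReal.ofReal (ψ p) ≤ Gnorm μ ψ η :=
  le_iSup (fun p : {p : ℝ // 2 ≤ p} => eLpNorm η (ENNReal.ofReal p) μ / ENNReal.ofReal (ψ p))
    ⟨p, hp⟩

theorem gnorm_sub_le {f g : Ω → ℝ} (hf : AEStronglyMeasurable f μ)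
    (hg : AEStronglyMeasurable g μ) : Gnorm μ ψ (f - g) ≤ Gnorm μ ψ f + Gnorm μ ψ g := by
  refine iSup_le fun p => ?_
  calc eLpNorm (f - g) (ENNReal.ofReal p) μ / ENNReal.ofReal (ψ p)
      ≤ (eLpNorm f (ENNReal.ofReal p) μ + eLpNorm g (ENNReal.ofReal p) μ)
          / ENNReal.ofReal (ψ p) := by
        gcongr
        exact eLpNorm_sub_le hf hg (ENNReal.one_le_ofReal.2 (by linarith [p.2]))
    _ = _ := ENNReal.add_div
    _ ≤ Gnorm μ ψ f + Gnorm μ ψ g :=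
        add_le_add (eLpNorm_div_le_gnorm f p.2) (eLpNorm_div_le_gnorm g p.2)

theorem memLp_of_gnorm_ne_top (hψ : ∀ p, 2 ≤ p → 0 < ψ p) {η : Ω → ℝ}
    (hη : AEStronglyMeasurable η μ) (hηψ : Gnorm μ ψ η ≠ ∞) {p : ℝ} (hp : 2 ≤ p) :
    MemLp η (ENNReal.ofReal p) μ :=
  ⟨hη, ((gnorm_le_iff hψ).1 le_rfl p hp).trans_lt (ENNReal.mul_lt_top hηψ.lt_top
    ENNReal.ofReal_lt_top)⟩

theorem gnorm_le_of_tendsto_ae (hψ : ∀ p, 2 ≤ p → 0 < ψ p) {f : ℕ → Ω → ℝ} {g : Ω → ℝ}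
    (hf : ∀ n, AEStronglyMeasurable (f n) μ) {B : ℝ≥0∞} (hfB : ∀ n, Gnorm μ ψ (f n) ≤ B)
    (hfg : ∀ᵐ x ∂μ, Tendsto (fun n => f n x) atTop (𝓝 (g x))) : Gnorm μ ψ g ≤ B := by
  refine (gnorm_le_iff hψ).2 fun p hp => ?_
  exact (Lp.eLpNorm_lim_le_liminf_eLpNorm hf g hfg).trans
    (liminf_le_of_frequently_le' (.of_forall fun n => (gnorm_le_iff hψ).1 (hfB n) p hp))

theorem tendsto_eLpNorm_two_sub_of_gnorm_le [IsFiniteMeasure μ] (hψ : ∀ p, 2 ≤ p → 0 < ψ p)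
    {f : ℕ → Ω → ℝ} {g : Ω → ℝ} (hf : ∀ n, AEStronglyMeasurable (f n) μ) {B : ℝ≥0∞}
    (hB : B ≠ ∞) (hfB : ∀ n, Gnorm μ ψ (f n) ≤ B)
    (hfg : ∀ᵐ x ∂μ, Tendsto (fun n => f n x) atTop (𝓝 (g x))) :
    Tendsto (fun n => eLpNorm (f n - g) 2 μ) atTop (𝓝 0) := by
  have hg : MemLp g 2 μ := by
    simpa using memLp_of_gnorm_ne_top hψ (aestronglyMeasurable_of_tendsto_ae atTop hf hfg)
      (ne_top_of_le_ne_top hB (gnorm_le_of_tendsto_ae hψ hf hfB hfg)) le_rfl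
  refine tendsto_Lp_finite_of_tendsto_ae one_le_two ENNReal.ofNat_ne_top hf hg ?_ hfg
  refine unifIntegrable_of_eLpNorm_le two_ne_zero (by norm_num : (2 : ℝ≥0∞) < 4) hf
    (ENNReal.mul_ne_top hB (ENNReal.ofReal_ne_top (r := ψ 4))) fun n => ?_
  simpa using (gnorm_le_iff hψ).1 (hfB n) 4 (by norm_num)

noncomputable def interpolationModulus (ψ ν : ℝ → ℝ) (δ : ℝ) : ℝ≥0∞ :=
  ⨆ p : {p : ℝ // 2 ≤ p},
    ENNReal.ofReal (δ ^ (1 / ((p : ℝ) + 1)) * ψ (2 * p) ^ ((p : ℝ) / (p + 1)) / ν p)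

theorem interpolationModulus_zero : interpolationModulus ψ ν 0 = 0 := by
  refine ENNReal.iSup_eq_zero.2 fun p => ?_
  rw [Real.zero_rpow (one_div_pos.2 (by linarith [p.2])).ne', zero_mul, zero_div,
    ENNReal.ofReal_zero]

theorem tendsto_interpolationModulus_nhdsGE
    (h : Tendsto (interpolationModulus ψ ν) (𝓝[>] 0) (𝓝 0)) :
    Tendsto (interpolationModulus ψ ν) (𝓝[≥] 0) (𝓝 0) := by
  rw [← Ioi_insert, nhdsWithin_insert]
  refine Tendsto.sup ?_ h
  simpa [interpolationModulus_zero] using tendsto_pure_nhds (interpolationModulus ψ ν) 0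

variable [IsProbabilityMeasure μ]

theorem eLpNorm_div_le_mul_of_gnorm_le (hψ : ∀ p, 2 ≤ p → 0 < ψ p) {X : Ω → ℝ}
    (hX : MemLp X 2 μ) {C : ℝ≥0∞} (hC : Gnorm μ ψ X ≤ C) {p : ℝ} (hp : 2 ≤ p) (hνp : 0 < ν p) :
    eLpNorm X (ENNReal.ofReal p) μ / ENNReal.ofReal (ν p) ≤
      (C + 1) * ENNReal.ofReal
        ((eLpNorm X 2 μ).toReal ^ (1 / (p + 1)) * ψ (2 * p) ^ (p / (p + 1)) / ν p) := by
  have hδ : eLpNorm X 2 μ = ENNReal.ofReal (eLpNorm X 2 μ).toReal :=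
    (ENNReal.ofReal_toReal hX.2.ne).symm
  have hψ2p : 0 < ψ (2 * p) := hψ _ (by linarith)
  have h2p : eLpNorm X (ENNReal.ofReal (2 * p)) μ ≤ C * ENNReal.ofReal (ψ (2 * p)) :=
    (gnorm_le_iff hψ).1 hC _ (by linarith)
  have hCpow : C ^ (p / (p + 1)) ≤ C + 1 := by
    rcases le_total C 1 with hC1 | hC1
    · exact (ENNReal.rpow_le_one hC1 (by positivity)).trans le_add_self
    · calc C ^ (p / (p + 1)) ≤ C ^ (1 : ℝ) :=
            ENNReal.rpow_le_rpow_of_exponent_le hC1 ((div_le_one (by positivity)).2 (by linarith))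
        _ ≤ C + 1 := by rw [ENNReal.rpow_one]; exact le_self_add
  calc eLpNorm X (ENNReal.ofReal p) μ / ENNReal.ofReal (ν p)
      ≤ ENNReal.ofReal (eLpNorm X 2 μ).toReal ^ (1 / (p + 1))
          * (C * ENNReal.ofReal (ψ (2 * p))) ^ (p / (p + 1)) / ENNReal.ofReal (ν p) := by
        gcongr
        rw [← hδ]
        exact (eLpNorm_le_eLpNorm_two_rpow_mul_eLpNorm_rpow hX.1 (by linarith)).trans
          (by gcongr)
    _ = C ^ (p / (p + 1)) *
          ENNReal.ofReal ((eLpNorm X 2 μ).toReal ^ (1 / (p + 1)) * ψ (2 * p) ^ (p / (p + 1))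
            / ν p) := by
        rw [ENNReal.mul_rpow_of_nonneg _ _ (by positivity),
          ENNReal.ofReal_rpow_of_nonneg ENNReal.toReal_nonneg (by positivity),
          ENNReal.ofReal_rpow_of_nonneg hψ2p.le (by positivity), ENNReal.ofReal_div_of_pos hνp,
          ENNReal.ofReal_mul (by positivity)]
        simp only [div_eq_mul_inv]
        ring
    _ ≤ _ := by gcongr

theorem gnorm_le_mul_interpolationModulus (hψ : ∀ p, 2 ≤ p → 0 < ψ p)
    (hν : ∀ p, 2 ≤ p → 0 < ν p) {X : Ω → ℝ} (hX : MemLp X 2 μ) {C : ℝ≥0∞}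
    (hC : Gnorm μ ψ X ≤ C) :
    Gnorm μ ν X ≤ (C + 1) * interpolationModulus ψ ν (eLpNorm X 2 μ).toReal := by
  rw [interpolationModulus, ENNReal.mul_iSup]
  exact iSup_mono fun p => eLpNorm_div_le_mul_of_gnorm_le hψ hX hC p.2 (hν p p.2)

theorem tendsto_gnorm_of_tendsto_eLpNorm_two (hψ : ∀ p, 2 ≤ p → 0 < ψ p)
    (hν : ∀ p, 2 ≤ p → 0 < ν p) (hψν : Tendsto (interpolationModulus ψ ν) (𝓝[>] 0) (𝓝 0))
    {X : ℕ → Ω → ℝ} (hX : ∀ n, AEStronglyMeasurable (X n) μ) {C : ℝ≥0∞} (hC : C ≠ ∞)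
    (hXC : ∀ n, Gnorm μ ψ (X n) ≤ C) (hX2 : Tendsto (fun n => eLpNorm (X n) 2 μ) atTop (𝓝 0)) :
    Tendsto (fun n => Gnorm μ ν (X n)) atTop (𝓝 0) := by
  have hXmem (n : ℕ) : MemLp (X n) 2 μ := by
    simpa using memLp_of_gnorm_ne_top hψ (hX n) (ne_top_of_le_ne_top hC (hXC n)) le_rfl
  have hδ : Tendsto (fun n => (eLpNorm (X n) 2 μ).toReal) atTop (𝓝[≥] 0) :=
    tendsto_nhdsWithin_iff.2
      ⟨by simpa [Function.comp_def] using (ENNReal.tendsto_toReal ENNReal.zero_ne_top).comp hX2,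
        .of_forall fun _ => ENNReal.toReal_nonneg⟩
  have hbound := ENNReal.Tendsto.const_mul ((tendsto_interpolationModulus_nhdsGE hψν).comp hδ)
    (Or.inr (ENNReal.add_ne_top.2 ⟨hC, ENNReal.one_ne_top⟩))
  rw [mul_zero] at hbound
  exact tendsto_of_tendsto_of_tendsto_of_le_of_le tendsto_const_nhds hbound (fun _ => zero_le)
    fun n => gnorm_le_mul_interpolationModulus hψ hν (hXmem n) (hXC n)

end GNorm

theorem stmt15 {Ω : Type*} [m0 : MeasurableSpace Ω] (μ : Measure Ω) [IsProbabilityMeasure μ]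
    (ψ ν : ℝ → ℝ) (hψ : PsiClass ψ) (hν : PsiClass ν)
    (hcond : Filter.Tendsto
      (fun δ : ℝ => ⨆ p : {p : ℝ // 2 ≤ p},
        ENNReal.ofReal (δ ^ (1/((p : ℝ) + 1)) * (ψ (2 * (p : ℝ))) ^ ((p : ℝ)/((p : ℝ) + 1)) / ν (p : ℝ)))
      (𝓝[>] (0:ℝ)) (𝓝 0))
    (ℱ : Filtration ℕ m0) (S : ℕ → Ω → ℝ) (hmart : Martingale S ℱ μ)
    (hbdd : (⨆ n : ℕ, Gnorm μ ψ (S n)) < ⊤) :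
    ∃ Slim : Ω → ℝ,
      (∀ᵐ ω ∂μ, Filter.Tendsto (fun n => S n ω) Filter.atTop (𝓝 (Slim ω))) ∧
      Filter.Tendsto (fun n => Gnorm μ ν (fun ω => S n ω - Slim ω)) Filter.atTop (𝓝 0) := by
  set B := ⨆ n, Gnorm μ ψ (S n)
  have hSB (n : ℕ) : Gnorm μ ψ (S n) ≤ B := le_iSup (fun n => Gnorm μ ψ (S n)) n
  have hS (n : ℕ) : AEStronglyMeasurable (S n) μ :=
    ((hmart.stronglyAdapted n).mono (ℱ.le n)).aestronglyMeasurable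
  have hS1 (n : ℕ) : eLpNorm (S n) 1 μ ≤ (B * ENNReal.ofReal (ψ 2)).toNNReal := by
    rw [ENNReal.coe_toNNReal (ENNReal.mul_ne_top hbdd.ne ENNReal.ofReal_ne_top)]
    exact (eLpNorm_le_eLpNorm_of_exponent_le one_le_two (hS n)).trans
      (by simpa using (gnorm_le_iff hψ.pos).1 (hSB n) 2 le_rfl)
  set Slim := ℱ.limitProcess S μ
  have hae : ∀ᵐ ω ∂μ, Tendsto (fun n => S n ω) atTop (𝓝 (Slim ω)) :=
    hmart.submartingale.ae_tendsto_limitProcess hS1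
  have hSlim : AEStronglyMeasurable Slim μ := aestronglyMeasurable_of_tendsto_ae atTop hS hae
  have hdiff (n : ℕ) : Gnorm μ ψ (S n - Slim) ≤ B + B :=
    (gnorm_sub_le (hS n) hSlim).trans
      (add_le_add (hSB n) (gnorm_le_of_tendsto_ae hψ.pos hS hSB hae))
  exact ⟨Slim, hae, tendsto_gnorm_of_tendsto_eLpNorm_two hψ.pos hν.pos hcond
    (fun n => (hS n).sub hSlim) (ENNReal.add_ne_top.2 ⟨hbdd.ne, hbdd.ne⟩) hdiff
    (tendsto_eLpNorm_two_sub_of_gnorm_le hψ.pos hS hbdd.ne hSB hae)⟩
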